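/- arXiv:1910.00924 — 2 statements merged into one kernel-verified Lean document; each statement's English description precedes it below -/
import Mathlib

section
/- The set {0,1,3,4,6,7,9,10} is extreme in ZMod 12: the function f with values 1, e^{7πi/6}, 1, e^{5πi/3}, −1, e^{7πi/6}, −1, e^{5πi/3} at 0,1,3,4,6,7,9,10 respectively (0 elsewhere) has zero autocorrelation at every nonzero shift. Moreover this set equals {0,1,3,4} + {0,6} and {0,3,6,9} + {0,1} as sum-sets. -/
/-!
On its support `E` the function `f` takes the values `e(φ x / 12)` with `e(t) = exp (2πit)`, for a
phase `φ : ZMod 12 → ZMod 12`, i.e. `f x = ψ (φ x)` for the standard additive character `ψ` of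
`ZMod 12`. The autocorrelation at `d` is then the sum of `ψ` over the multiset of phase differences
`φ x - φ (x - d)`, `x ∈ E ∩ (E + d)`. For every `d ≠ 0` this multiset is invariant under
translation by `6`, and `ψ 6 = -1`, so the sum equals its own negative.
-/

open Complex Finset Pointwise

def phaseDifferences {G : Type*} [AddGroup G] [DecidableEq G] (E : Finset G) (φ : G → G)
    (d : G) : Multiset G :=
  (E.filter (· - d ∈ E)).val.map fun x => φ x - φ (x - d)

namespace AddChar

theorem multiset_sum_map_eq_zero_of_map_add_eq {G R : Type*} [AddMonoid G] [Ring R]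
    [NoZeroDivisors R] [CharZero R] {ψ : AddChar G R} {h : G} (hψ : ψ h = -1)
    {M : Multiset G} (hM : M.map (· + h) = M) : (M.map ψ).sum = 0 := by
  refine CharZero.eq_neg_self_iff.mp ?_
  calc (M.map ψ).sum = ((M.map (· + h)).map ψ).sum := by rw [hM]
    _ = -(M.map ψ).sum := by
      simp only [Multiset.map_map, Function.comp_def, map_add_eq_mul, hψ, mul_neg_one,
        Multiset.sum_map_neg]

theorem sum_ite_mul_conj_ite_sub {G K : Type*} [AddCommGroup G] [Fintype G] [DecidableEq G]
    [RCLike K] (ψ : AddChar G K) (E : Finset G) (φ : G → G) (d : G) :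
    ∑ x, (if x ∈ E then ψ (φ x) else 0) * starRingEnd K (if x - d ∈ E then ψ (φ (x - d)) else 0) =
      ((phaseDifferences E φ d).map ψ).sum := by
  have hE : E.filter (· - d ∈ E) = univ.filter fun x => x ∈ E ∧ x - d ∈ E := by
    ext x; simp
  have hψ (a b : G) : ψ (a - b) = ψ a * starRingEnd K (ψ b) := by
    rw [sub_eq_add_neg, map_add_eq_mul, map_neg_eq_conj]
  rw [phaseDifferences, Multiset.map_map, ← Finset.sum_eq_multiset_sum, hE, Finset.sum_filter]
  refine Finset.sum_congr rfl fun x _ => ?_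
  by_cases hx : x ∈ E <;> by_cases hxd : x - d ∈ E <;> simp [hx, hxd, hψ]

end AddChar

theorem ZMod.stdAddChar_twelve_natCast (k : ℕ) :
    stdAddChar (k : ZMod 12) = exp ((k * Real.pi / 6 : ℝ) * I) := by
  rw [← Int.cast_natCast, stdAddChar_coe]
  congr 1
  push_cast
  ring

def extremalSupport : Finset (ZMod 12) := {0, 1, 3, 4, 6, 7, 9, 10}

def extremalPhase (x : ZMod 12) : ZMod 12 := ![0, 7, 0, 0, 10, 0, 6, 7, 0, 6, 10, 0] x

theorem phaseDifferences_extremal_map_add_six (d : ZMod 12) (hd : d ≠ 0) :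
    (phaseDifferences extremalSupport extremalPhase d).map (· + 6) =
      phaseDifferences extremalSupport extremalPhase d := by
  revert d; decide

theorem extreme_eight_set_zmod12 :
    (∀ f : ZMod 12 → ℂ,
      f 0 = 1 → f 1 = Complex.exp ((7 * Real.pi / 6 : ℝ) * Complex.I) →
      f 3 = 1 → f 4 = Complex.exp ((5 * Real.pi / 3 : ℝ) * Complex.I) →
      f 6 = -1 → f 7 = Complex.exp ((7 * Real.pi / 6 : ℝ) * Complex.I) →
      f 9 = -1 → f 10 = Complex.exp ((5 * Real.pi / 3 : ℝ) * Complex.I) →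
      (∀ x : ZMod 12,
        x ∉ ({0, 1, 3, 4, 6, 7, 9, 10} : Finset (ZMod 12)) → f x = 0) →
      ∀ d : ZMod 12, d ≠ 0 →
        ∑ x : ZMod 12, f x * (starRingEnd ℂ) (f (x - d)) = 0) ∧
    ({0, 1, 3, 4} : Finset (ZMod 12)) + ({0, 6} : Finset (ZMod 12)) =
      ({0, 1, 3, 4, 6, 7, 9, 10} : Finset (ZMod 12)) ∧
    ({0, 3, 6, 9} : Finset (ZMod 12)) + ({0, 1} : Finset (ZMod 12)) =
      ({0, 1, 3, 4, 6, 7, 9, 10} : Finset (ZMod 12)) := by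
  refine ⟨fun f h0 h1 h3 h4 h6 h7 h9 h10 hsupp d hd => ?_, by decide, by decide⟩
  have ψ0 : ZMod.stdAddChar (0 : ZMod 12) = 1 := AddChar.map_zero_eq_one _
  have ψ6 : ZMod.stdAddChar (6 : ZMod 12) = -1 := by
    simpa using ZMod.stdAddChar_twelve_natCast 6
  have ψ7 : ZMod.stdAddChar (7 : ZMod 12) = exp ((7 * Real.pi / 6 : ℝ) * I) := by
    simpa using ZMod.stdAddChar_twelve_natCast 7
  have ψ10 : ZMod.stdAddChar (10 : ZMod 12) = exp ((5 * Real.pi / 3 : ℝ) * I) := by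
    convert ZMod.stdAddChar_twelve_natCast 10 using 3 <;> push_cast <;> ring
  have hf : f = fun x => if x ∈ extremalSupport then ZMod.stdAddChar (extremalPhase x) else 0 := by
    funext x
    split_ifs with hx
    · simp only [extremalSupport, Finset.mem_insert, Finset.mem_singleton] at hx
      rcases hx with rfl | rfl | rfl | rfl | rfl | rfl | rfl | rfl
      exacts [h0.trans ψ0.symm, h1.trans ψ7.symm, h3.trans ψ0.symm, h4.trans ψ10.symm,
        h6.trans ψ6.symm, h7.trans ψ7.symm, h9.trans ψ6.symm, h10.trans ψ10.symm]
    · exact hsupp x hx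
  subst hf
  rw [AddChar.sum_ite_mul_conj_ite_sub]
  exact AddChar.multiset_sum_map_eq_zero_of_map_add_eq ψ6
    (phaseDifferences_extremal_map_add_six d hd)
end

section
/- The 4-element set {(0,0), (0,1), (1,3), (1,0)} is extreme in ZMod 2 × ZMod 4: the function f with values 1, i, −1, i at (0,0), (0,1), (1,3), (1,0) respectively (and 0 elsewhere) has zero autocorrelation at every nonzero d ∈ ZMod 2 × ZMod 4. -/
/-! Every nonzero `d` other than `(0, 2)` is the difference of exactly two ordered pairs of points
of the support, and the two contributions to the autocorrelation cancel; `(0, 2)` is no such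
difference. Since the values of `f` are Gaussian integers and `ℤ[i] → ℂ` is a ring homomorphism
commuting with conjugation, this check can be done in `ℤ[i]`, where equality is decidable. -/

open Complex Finset

def autocorrelation {G R : Type*} [AddCommGroup G] [Fintype G] [NonUnitalNonAssocSemiring R]
    [Star R] (f : G → R) (d : G) : R :=
  ∑ x, f x * star (f (x - d))

theorem autocorrelation_comp {G R S : Type*} [AddCommGroup G] [Fintype G] [NonAssocSemiring R]
    [Star R] [NonAssocSemiring S] [Star S] (φ : R →+* S) (hφ : ∀ r, φ (star r) = star (φ r))
    (f : G → R) (d : G) :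
    autocorrelation (φ ∘ f) d = φ (autocorrelation f d) := by
  simp only [autocorrelation, Function.comp_apply, map_sum, map_mul, hφ]

def gaussianWitness : ZMod 2 × ZMod 4 → GaussianInt := fun x =>
  (![![1, Zsqrtd.sqrtd, 0, 0], ![Zsqrtd.sqrtd, 0, 0, -1]] : Fin 2 → Fin 4 → GaussianInt) x.1 x.2

theorem autocorrelation_gaussianWitness_eq_zero :
    ∀ d : ZMod 2 × ZMod 4, d ≠ 0 → autocorrelation gaussianWitness d = 0 := by
  decide

theorem eq_toComplex_comp_gaussianWitness {f : ZMod 2 × ZMod 4 → ℂ} (h00 : f (0, 0) = 1)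
    (h01 : f (0, 1) = I) (h13 : f (1, 3) = -1) (h10 : f (1, 0) = I)
    (hsupp : ∀ x ∉ ({(0, 0), (0, 1), (1, 3), (1, 0)} : Finset (ZMod 2 × ZMod 4)), f x = 0) :
    f = GaussianInt.toComplex ∘ gaussianWitness := by
  funext x
  fin_cases x <;> simp [gaussianWitness, GaussianInt.toComplex_def] <;>
    first | exact h00 | exact h01 | exact h13 | exact h10 | exact hsupp _ (by decide)

theorem extreme_four_set_zmod2_zmod4 :
    ∀ f : ZMod 2 × ZMod 4 → ℂ,
      f (0, 0) = 1 → f (0, 1) = Complex.I → f (1, 3) = -1 →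
      f (1, 0) = Complex.I →
      (∀ x : ZMod 2 × ZMod 4,
        x ∉ ({(0, 0), (0, 1), (1, 3), (1, 0)} : Finset (ZMod 2 × ZMod 4)) →
          f x = 0) →
      ∀ d : ZMod 2 × ZMod 4, d ≠ 0 →
        ∑ x : ZMod 2 × ZMod 4, f x * (starRingEnd ℂ) (f (x - d)) = 0 := by
  intro f h00 h01 h13 h10 hsupp d hd
  show autocorrelation f d = 0
  rw [eq_toComplex_comp_gaussianWitness h00 h01 h13 h10 hsupp,
    autocorrelation_comp _ GaussianInt.toComplex_star,
    autocorrelation_gaussianWitness_eq_zero d hd, map_zero]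
end
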